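/- (Two-firm case: nonemptiness of the identified set.) Let q(d,z) ≥ 0 for d ∈ {0, L, H} and z ∈ {0,1} with Σ_{d ∈ {0,L,H}} q(d,z) = 1 for each z (interpreted as q(d,z) = P(D=d | Z=z)). Let Θ_I(LM) be the set of vectors p = (p_{(d,d')})_{(d,d') ∈ {0,L,H}²} with p_{(d,d')} ≥ 0, Σ p = 1, p_{(L,0)} = p_{(H,0)} = 0 (Assumption LM), and satisfying q(d,1) = Σ_{d' ∈ {0,L,H}} p_{(d',d)} and q(d,0) = Σ_{d' ∈ {0,L,H}} p_{(d,d')} for every d ∈ {0,L,H}. Then Θ_I(LM) ≠ ∅ if and only if q(0,1) ≤ q(0,0). -/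

import Mathlib

/-!
Necessity: under LM the only type ending in non-employment is `(0,0)`, so
`q(0,1) = p_{(0,0)} ≤ ∑_{d'} p_{(0,d')} = q(0,0)`.

Sufficiency: put mass `q(0,1)` on `(0,0)` and spread the rest as the independent
coupling of the untreated margin, with the compliers' mass `q(0,0) - q(0,1)` placed
at `0`, and the treated margin restricted to employment. Both have total mass
`1 - q(0,1)`, and since the second vanishes at `0`, no type moves into
non-employment.
-/

/-- The three layers in the two-firm setting: non-employment (`nul`),
low-type firms (`L`) and high-type firms (`H`). -/
inductive Layer : Type
  | nul : Layer
  | L : Layer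
  | H : Layer
  deriving DecidableEq

instance : Fintype Layer :=
  ⟨{Layer.nul, Layer.L, Layer.H}, by intro x; cases x <;> simp⟩

open Finset

section ProductCoupling

variable {α β : Type*} [Fintype β]

noncomputable def productCoupling (r : α → ℝ) (b : β → ℝ) (t : α × β) : ℝ :=
  r t.1 * b t.2 / ∑ y, b y

variable {r : α → ℝ} {b : β → ℝ}

lemma productCoupling_nonneg (hr : 0 ≤ r) (hb : 0 ≤ b) (t : α × β) :
    0 ≤ productCoupling r b t :=
  div_nonneg (mul_nonneg (hr _) (hb _)) (sum_nonneg fun y _ => hb y)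

lemma sum_productCoupling_fst [Fintype α] (hr : 0 ≤ r) (hmass : ∑ x, r x = ∑ y, b y) (x : α) :
    ∑ y, productCoupling r b (x, y) = r x := by
  simp only [productCoupling, ← sum_div, ← mul_sum]
  by_cases hb : ∑ y, b y = 0
  · rw [hb, div_zero, eq_comm]
    exact congrFun ((Fintype.sum_eq_zero_iff_of_nonneg hr).1 (hmass.trans hb)) x
  · exact mul_div_cancel_right₀ _ hb

lemma sum_productCoupling_snd [Fintype α] (hb : 0 ≤ b) (hmass : ∑ x, r x = ∑ y, b y) (y : β) :
    ∑ x, productCoupling r b (x, y) = b y := by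
  simp only [productCoupling, ← sum_div, ← sum_mul, hmass]
  by_cases hb0 : ∑ y, b y = 0
  · rw [hb0, div_zero, eq_comm]
    exact congrFun ((Fintype.sum_eq_zero_iff_of_nonneg hb).1 hb0) y
  · exact mul_div_cancel_left₀ _ hb0

end ProductCoupling

lemma Layer.sum_eq (f : Layer → ℝ) : ∑ d, f d = f .nul + f .L + f .H := by
  rw [show (univ : Finset Layer) = {.nul, .L, .H} from rfl, sum_insert (by decide),
    sum_pair (by decide), add_assoc]

def identifiedSetLM (q : Layer → Fin 2 → ℝ) : Set (Layer × Layer → ℝ) :=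
  {p | (∀ t, 0 ≤ p t) ∧
    (∑ t : Layer × Layer, p t = 1) ∧
    p (Layer.L, Layer.nul) = 0 ∧ p (Layer.H, Layer.nul) = 0 ∧
    (∀ d, q d 1 = ∑ d' : Layer, p (d', d)) ∧
    (∀ d, q d 0 = ∑ d' : Layer, p (d, d'))}

lemma le_of_mem_identifiedSetLM {q : Layer → Fin 2 → ℝ} {p : Layer × Layer → ℝ}
    (hp : p ∈ identifiedSetLM q) : q .nul 1 ≤ q .nul 0 := by
  obtain ⟨hnonneg, -, hL, hH, htreated, huntreated⟩ := hp
  calc q .nul 1 = p (.nul, .nul) := by simp [htreated, Layer.sum_eq, hL, hH]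
    _ ≤ ∑ d', p (.nul, d') := single_le_sum (fun d' _ => hnonneg (.nul, d')) (mem_univ _)
    _ = q .nul 0 := (huntreated .nul).symm

def lmUntreatedMass (q : Layer → Fin 2 → ℝ) : Layer → ℝ
  | .nul => q .nul 0 - q .nul 1
  | .L => q .L 0
  | .H => q .H 0

def lmTreatedMass (q : Layer → Fin 2 → ℝ) : Layer → ℝ
  | .nul => 0
  | .L => q .L 1
  | .H => q .H 1

noncomputable def lmWitness (q : Layer → Fin 2 → ℝ) : Layer × Layer → ℝ :=
  Pi.single (.nul, .nul) (q .nul 1) + productCoupling (lmUntreatedMass q) (lmTreatedMass q)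

section Witness

variable {q : Layer → Fin 2 → ℝ}

lemma lmUntreatedMass_nonneg (hq : ∀ d z, 0 ≤ q d z) (h : q .nul 1 ≤ q .nul 0) :
    0 ≤ lmUntreatedMass q := by
  rintro (_ | _ | _) <;> simp [lmUntreatedMass, hq, h]

lemma lmTreatedMass_nonneg (hq : ∀ d z, 0 ≤ q d z) : 0 ≤ lmTreatedMass q := by
  rintro (_ | _ | _) <;> simp [lmTreatedMass, hq]

lemma sum_lmUntreatedMass (hsum : ∑ d, q d 0 = 1) :
    ∑ d, lmUntreatedMass q d = 1 - q .nul 1 := by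
  rw [Layer.sum_eq] at hsum ⊢
  simp only [lmUntreatedMass]
  linarith

lemma sum_lmTreatedMass (hsum : ∑ d, q d 1 = 1) :
    ∑ d, lmTreatedMass q d = 1 - q .nul 1 := by
  rw [Layer.sum_eq] at hsum ⊢
  simp only [lmTreatedMass]
  linarith

lemma lmWitness_mem_identifiedSetLM (hq : ∀ d z, 0 ≤ q d z) (hsum : ∀ z, ∑ d, q d z = 1)
    (h : q .nul 1 ≤ q .nul 0) : lmWitness q ∈ identifiedSetLM q := by
  have hr := lmUntreatedMass_nonneg hq h
  have hb := lmTreatedMass_nonneg hq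
  have hmass := (sum_lmUntreatedMass (hsum 0)).trans (sum_lmTreatedMass (hsum 1)).symm
  refine ⟨fun t => add_nonneg ?_ (productCoupling_nonneg hr hb t), ?_, ?_, ?_, ?_, ?_⟩
  · exact (Pi.single_nonneg (α := fun _ => ℝ)).2 (hq .nul 1) t
  · simp only [lmWitness, Pi.add_apply, sum_add_distrib, sum_pi_single', mem_univ, if_true,
      Fintype.sum_prod_type, sum_productCoupling_fst hr hmass, sum_lmUntreatedMass (hsum 0)]
    ring
  · simp [lmWitness, productCoupling, lmTreatedMass]
  · simp [lmWitness, productCoupling, lmTreatedMass]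
  · intro d
    simp only [lmWitness, Pi.add_apply, sum_add_distrib, sum_productCoupling_snd hb hmass]
    cases d <;> simp [lmTreatedMass, Pi.single_apply]
  · intro d
    simp only [lmWitness, Pi.add_apply, sum_add_distrib, sum_productCoupling_fst hr hmass]
    cases d <;> simp [lmUntreatedMass, Pi.single_apply]

end Witness

theorem two_firm_identified_set_nonempty_iff
    (q : Layer → Fin 2 → ℝ)
    (hq : ∀ d z, 0 ≤ q d z)
    (hsum : ∀ z, ∑ d : Layer, q d z = 1) :
    (∃ p : Layer × Layer → ℝ,
      (∀ t, 0 ≤ p t) ∧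
      (∑ t : Layer × Layer, p t = 1) ∧
      p (Layer.L, Layer.nul) = 0 ∧ p (Layer.H, Layer.nul) = 0 ∧
      (∀ d, q d 1 = ∑ d' : Layer, p (d', d)) ∧
      (∀ d, q d 0 = ∑ d' : Layer, p (d, d')))
    ↔ q Layer.nul 1 ≤ q Layer.nul 0 :=
  ⟨fun ⟨_, hp⟩ => le_of_mem_identifiedSetLM hp,
    fun h => ⟨lmWitness q, lmWitness_mem_identifiedSetLM hq hsum h⟩⟩
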